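/- Let α ∈ (0, π/2), A > 0, c(α) = −arctan(sin α/(3 cos α)), and for x ∈ ℝ define the 2×2 matrix J(x) = −A·[[cos(x + α) + cos(x − α), cos(x + α)], [cos(x + α), cos(x + α) + cos(x − α)]] (the Jacobian of the reduced dynamics ẋᵢ = Σ_{j=1}^{2} A sin(−xⱼ − α) − A sin(xᵢ − α) evaluated at x₁ = x₂ = x). Then: (i) if α < arctan(√3), both eigenvalues of J(c(α)) are negative real numbers; (ii) for every α ∈ (0, π/2), the matrix J(π + c(α)) has a positive real eigenvalue; and (iii) if α > arctan(√3), the matrix J(c(α)) has a positive real eigenvalue. -/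

import Mathlib

/-!
The matrix `s • !![a + b, a; a, a + b]` has eigenvectors `(1, 1)` and `(1, -1)`, with
eigenvalues `s (2a + b)` and `s b`; for `J(x)` these are `-A (2 cos (x + α) + cos (x - α))`
and `-A cos (x - α)`. With `θ = arctan (tan α / 3)` one has `sin θ = (tan α / 3) cos θ`, whence
`3 cos α · cos (c(α) - α) = cos θ (4 cos² α - 1)` and
`3 cos α · (2 cos (c(α) + α) + cos (c(α) - α)) = cos θ (8 cos² α + 1)`.
So the first eigenvalue of `J(c(α))` is always negative, and the second has the sign of
`α - π/3 = α - arctan √3`. Replacing `x` by `π + x` negates every cosine, i.e. replaces `A`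
by `-A`.
-/

open Real

/-- c(α) = −arctan(sin α / (3 cos α)). -/
noncomputable def cAlpha (α : ℝ) : ℝ := -Real.arctan (Real.sin α / (3 * Real.cos α))

/-- The Jacobian J(x) of the reduced dynamics evaluated at x₁ = x₂ = x. -/
noncomputable def Jmat (A α x : ℝ) : Matrix (Fin 2) (Fin 2) ℝ :=
  (-A) • !![Real.cos (x + α) + Real.cos (x - α), Real.cos (x + α);
            Real.cos (x + α), Real.cos (x + α) + Real.cos (x - α)]

theorem hasEigenvalue_toLin'_smul_iff {K : Type*} [Field K] [NeZero (2 : K)] (s a b μ : K) :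
    Module.End.HasEigenvalue (Matrix.toLin' (s • !![a + b, a; a, a + b])) μ ↔
      μ = s * (2 * a + b) ∨ μ = s * b := by
  constructor
  · intro h
    obtain ⟨v, hv, hv0⟩ := h.exists_hasEigenvector
    rw [Module.End.mem_eigenspace_iff, Matrix.toLin'_apply] at hv
    have h0 := congrFun hv 0
    have h1 := congrFun hv 1
    simp only [Matrix.smul_mulVec, Matrix.mulVec_fin_two, Matrix.of_apply, Matrix.cons_val',
      Matrix.cons_val_zero, Matrix.cons_val_one, Matrix.empty_val', Matrix.cons_val_fin_one,
      Pi.smul_apply, smul_eq_mul] at h0 h1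
    have hsum : (s * (2 * a + b) - μ) * (v 0 + v 1) = 0 := by linear_combination h0 + h1
    have hdiff : (s * b - μ) * (v 0 - v 1) = 0 := by linear_combination h0 - h1
    by_contra! hμ
    have hs : v 0 + v 1 = 0 := (mul_eq_zero.1 hsum).resolve_left (sub_ne_zero.2 hμ.1.symm)
    have hd : v 0 - v 1 = 0 := (mul_eq_zero.1 hdiff).resolve_left (sub_ne_zero.2 hμ.2.symm)
    have h2v0 : 2 * v 0 = 0 := by linear_combination hs + hd
    have h2v1 : 2 * v 1 = 0 := by linear_combination hs - hd
    refine hv0 (funext fun i => ?_)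
    fin_cases i
    · exact (mul_eq_zero.1 h2v0).resolve_left two_ne_zero
    · exact (mul_eq_zero.1 h2v1).resolve_left two_ne_zero
  · rintro (rfl | rfl)
    · refine Module.End.hasEigenvalue_of_hasEigenvector (x := ![1, 1]) ⟨?_, ?_⟩
      · rw [Module.End.mem_eigenspace_iff, Matrix.toLin'_apply]
        ext i; fin_cases i <;> simp <;> ring
      · simp
    · refine Module.End.hasEigenvalue_of_hasEigenvector (x := ![1, -1]) ⟨?_, ?_⟩
      · rw [Module.End.mem_eigenspace_iff, Matrix.toLin'_apply]
        ext i; fin_cases i <;> simp <;> ring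
      · simp

theorem hasEigenvalue_Jmat_iff (A α x μ : ℝ) :
    Module.End.HasEigenvalue (Matrix.toLin' (Jmat A α x)) μ ↔
      μ = -A * (2 * cos (x + α) + cos (x - α)) ∨ μ = -A * cos (x - α) :=
  hasEigenvalue_toLin'_smul_iff _ _ _ _

theorem Jmat_pi_add (A α x : ℝ) : Jmat A α (π + x) = Jmat (-A) α x := by
  rw [Jmat, Jmat, show π + x + α = x + α + π by ring, show π + x - α = x - α + π by ring,
    cos_add_pi, cos_add_pi]
  ext i j
  fin_cases i <;> fin_cases j <;> simp <;> ring

section cAlpha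

variable {α : ℝ}

theorem sin_arctan_eq_mul_cos_arctan (t : ℝ) : sin (arctan t) = t * cos (arctan t) := by
  rw [sin_arctan, cos_arctan, mul_one_div]

theorem three_mul_cos_mul_cos_cAlpha_sub (hα : cos α ≠ 0) :
    3 * cos α * cos (cAlpha α - α) =
      cos (arctan (sin α / (3 * cos α))) * (4 * cos α ^ 2 - 1) := by
  rw [cAlpha,
    show -arctan (sin α / (3 * cos α)) - α = -(arctan (sin α / (3 * cos α)) + α) by ring,
    cos_neg, cos_add, sin_arctan_eq_mul_cos_arctan]
  field_simp
  linear_combination -sin_sq_add_cos_sq α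

theorem three_mul_cos_mul_cos_cAlpha_add (hα : cos α ≠ 0) :
    3 * cos α * cos (cAlpha α + α) =
      cos (arctan (sin α / (3 * cos α))) * (2 * cos α ^ 2 + 1) := by
  rw [cAlpha, neg_add_eq_sub, cos_sub, sin_arctan_eq_mul_cos_arctan]
  field_simp
  linear_combination sin_sq_add_cos_sq α

theorem two_mul_cos_cAlpha_add_add_cos_cAlpha_sub_pos (hα : 0 < cos α) :
    0 < 2 * cos (cAlpha α + α) + cos (cAlpha α - α) := by
  have key : 3 * cos α * (2 * cos (cAlpha α + α) + cos (cAlpha α - α)) =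
      cos (arctan (sin α / (3 * cos α))) * (8 * cos α ^ 2 + 1) := by
    linear_combination 2 * three_mul_cos_mul_cos_cAlpha_add hα.ne' +
      three_mul_cos_mul_cos_cAlpha_sub hα.ne'
  have : 0 < 3 * cos α * (2 * cos (cAlpha α + α) + cos (cAlpha α - α)) := by
    rw [key]; exact mul_pos (cos_arctan_pos _) (by positivity)
  exact pos_of_mul_pos_right this (by positivity)

theorem cos_cAlpha_sub_pos (hα : 1 / 2 < cos α) : 0 < cos (cAlpha α - α) := by
  have : 0 < 3 * cos α * cos (cAlpha α - α) := by
    rw [three_mul_cos_mul_cos_cAlpha_sub (by positivity)]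
    exact mul_pos (cos_arctan_pos _) (by nlinarith)
  exact pos_of_mul_pos_right this (by positivity)

theorem cos_cAlpha_sub_neg (hα₀ : 0 < cos α) (hα : cos α < 1 / 2) :
    cos (cAlpha α - α) < 0 := by
  have : 3 * cos α * cos (cAlpha α - α) < 0 := by
    rw [three_mul_cos_mul_cos_cAlpha_sub hα₀.ne']
    exact mul_neg_of_pos_of_neg (cos_arctan_pos _) (by nlinarith)
  exact neg_of_mul_neg_right this (by positivity)

end cAlpha

/-- (i) If α < arctan √3, both eigenvalues of J(c(α)) are negative;
(ii) for every α ∈ (0, π/2), J(π + c(α)) has a positive eigenvalue;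
(iii) if α > arctan √3, J(c(α)) has a positive eigenvalue. -/
theorem stmt_12 (A α : ℝ) (hA : 0 < A) (hα : α ∈ Set.Ioo 0 (π / 2)) :
    (α < Real.arctan (Real.sqrt 3) →
      (∃ μ : ℝ, Module.End.HasEigenvalue (Matrix.toLin' (Jmat A α (cAlpha α))) μ) ∧
      ∀ μ : ℝ, Module.End.HasEigenvalue (Matrix.toLin' (Jmat A α (cAlpha α))) μ → μ < 0) ∧
    (∃ μ : ℝ, 0 < μ ∧
      Module.End.HasEigenvalue (Matrix.toLin' (Jmat A α (π + cAlpha α))) μ) ∧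
    (Real.arctan (Real.sqrt 3) < α →
      ∃ μ : ℝ, 0 < μ ∧
        Module.End.HasEigenvalue (Matrix.toLin' (Jmat A α (cAlpha α))) μ) := by
  obtain ⟨hα₀, hα₁⟩ := hα
  have hcos : 0 < cos α := cos_pos_of_mem_Ioo ⟨by linarith [pi_pos], hα₁⟩
  have hsum := two_mul_cos_cAlpha_add_add_cos_cAlpha_sub_pos hcos
  rw [arctan_sqrt_three]
  refine ⟨fun hlt => ?_, ?_, fun hgt => ?_⟩
  · have hsub : 0 < cos (cAlpha α - α) := cos_cAlpha_sub_pos <| cos_pi_div_three ▸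
      cos_lt_cos_of_nonneg_of_le_pi_div_two hα₀.le (by linarith [pi_pos]) hlt
    refine ⟨⟨_, (hasEigenvalue_Jmat_iff ..).2 (Or.inr rfl)⟩, fun μ hμ => ?_⟩
    rcases (hasEigenvalue_Jmat_iff ..).1 hμ with rfl | rfl <;> nlinarith
  · rw [Jmat_pi_add]
    exact ⟨_, by nlinarith, (hasEigenvalue_Jmat_iff ..).2 (Or.inl rfl)⟩
  · have hsub : cos (cAlpha α - α) < 0 := cos_cAlpha_sub_neg hcos <| cos_pi_div_three ▸
      cos_lt_cos_of_nonneg_of_le_pi_div_two (by positivity) hα₁.le hgt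
    exact ⟨_, by nlinarith, (hasEigenvalue_Jmat_iff ..).2 (Or.inr rfl)⟩
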